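/- arXiv:0806.1981 — 3 statements merged into one kernel-verified Lean document; each statement's English description precedes it below -/
import Mathlib

section
/- Every subset of the set {eᵢ − eⱼ : 1 ≤ i, j ≤ n} ∪ {0} in ℤⁿ is saturated, where e₁, ..., eₙ is the standard basis of ℤⁿ. -/
/-- A finite set of vectors in `ℚⁿ` is *saturated* if every vector that is both an
integer combination and a nonnegative-rational combination of its elements is a
nonnegative-integer combination of its elements. -/
def IsSaturatedSet {n : ℕ} (M : Finset (Fin n → ℚ)) : Prop :=
  ∀ x : Fin n → ℚ,
    (∃ c : (Fin n → ℚ) → ℤ, x = ∑ v ∈ M, (c v : ℚ) • v) →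
    (∃ q : (Fin n → ℚ) → ℚ, (∀ v ∈ M, 0 ≤ q v) ∧ x = ∑ v ∈ M, q v • v) →
    ∃ m : (Fin n → ℚ) → ℕ, x = ∑ v ∈ M, (m v : ℚ) • v

/-!
A nonnegative combination of vectors can be rewritten as a nonnegative combination of a linearly
independent subset (Carathéodory's theorem for cones). Linearly independent vectors `eₐ - e_b`
are the edges of a forest, and contracting one of them, i.e. merging vertex `b` into `a`, turns
the others into a linearly independent set of vectors of the same shape, because the contraction
map has kernel spanned by `eₐ - e_b`. By induction on the number of edges, an integral vector has
integral coefficients in such a set; being nonnegative as well, they are natural numbers.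
-/

open Finset

section Caratheodory

variable {K E ι : Type*} [Field K] [LinearOrder K] [IsStrictOrderedRing K]
  [AddCommGroup E] [Module K E]

theorem exists_sum_smul_eq_zero_pos_of_not_linearIndepOn {s : Finset ι} {f : ι → E}
    (hs : ¬LinearIndepOn K f (s : Set ι)) :
    ∃ g : ι → K, ∑ i ∈ s, g i • f i = 0 ∧ ∃ i ∈ s, 0 < g i := by
  classical
  obtain ⟨g, hgs, hsum, hg⟩ := linearDepOn_iff.1 hs
  have hsupp : g.support ⊆ s := by exact_mod_cast (Finsupp.mem_supported K g).1 hgs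
  rw [sum_subset hsupp fun i _ hi => by simp [Finsupp.notMem_support_iff.1 hi]] at hsum
  obtain ⟨i, hi⟩ := Finsupp.ne_iff.1 hg
  have his : i ∈ s := hsupp (Finsupp.mem_support_iff.2 hi)
  rcases lt_or_gt_of_ne hi with hneg | hpos
  · exact ⟨-g, by simp [neg_smul, hsum], i, his, by simpa using hneg⟩
  · exact ⟨g, hsum, i, his, hpos⟩

theorem exists_nonneg_sum_erase_eq_of_not_linearIndepOn [DecidableEq ι] {s : Finset ι}
    {f : ι → E} {q : ι → K} (hq : ∀ i ∈ s, 0 ≤ q i)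
    (hs : ¬LinearIndepOn K f (s : Set ι)) :
    ∃ j ∈ s, ∃ q' : ι → K, (∀ i ∈ s.erase j, 0 ≤ q' i) ∧
      ∑ i ∈ s.erase j, q' i • f i = ∑ i ∈ s, q i • f i := by
  obtain ⟨g, hg, i₀, hi₀, hgi₀⟩ := exists_sum_smul_eq_zero_pos_of_not_linearIndepOn hs
  obtain ⟨j, hj, hmin⟩ := (s.filter (0 < g ·)).exists_min_image (fun i => q i / g i)
    ⟨i₀, mem_filter.2 ⟨hi₀, hgi₀⟩⟩
  rw [mem_filter] at hj
  -- the largest step along `-g` that keeps all coefficients nonnegative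
  set θ := q j / g j
  have hθ : 0 ≤ θ := div_nonneg (hq j hj.1) hj.2.le
  have hq' : ∀ i ∈ s, 0 ≤ q i - θ * g i := by
    intro i hi
    rcases le_or_gt (g i) 0 with hgi | hgi
    · nlinarith [hq i hi]
    · have := hmin i (mem_filter.2 ⟨hi, hgi⟩)
      rw [le_div_iff₀ hgi] at this
      linarith
  refine ⟨j, hj.1, fun i => q i - θ * g i, fun i hi => hq' i (mem_of_mem_erase hi), ?_⟩
  have hj0 : q j - θ * g j = 0 := by simp [θ, hj.2.ne']
  calc ∑ i ∈ s.erase j, (q i - θ * g i) • f i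
      = ∑ i ∈ s, (q i - θ * g i) • f i := sum_erase _ (by simp [hj0])
    _ = ∑ i ∈ s, q i • f i - θ • ∑ i ∈ s, g i • f i := by
      simp only [sub_smul, mul_smul, sum_sub_distrib, smul_sum]
    _ = ∑ i ∈ s, q i • f i := by rw [hg, smul_zero, sub_zero]

theorem exists_linearIndepOn_nonneg_sum_eq (s : Finset ι) (f : ι → E) (q : ι → K)
    (hq : ∀ i ∈ s, 0 ≤ q i) :
    ∃ t ⊆ s, LinearIndepOn K f (t : Set ι) ∧ ∃ q' : ι → K, (∀ i ∈ t, 0 ≤ q' i) ∧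
      ∑ i ∈ t, q' i • f i = ∑ i ∈ s, q i • f i := by
  classical
  induction s using Finset.strongInduction generalizing q with
  | H s ih =>
    by_cases hs : LinearIndepOn K f (s : Set ι)
    · exact ⟨s, subset_rfl, hs, q, hq, rfl⟩
    obtain ⟨j, hj, q', hq', hsum⟩ := exists_nonneg_sum_erase_eq_of_not_linearIndepOn hq hs
    obtain ⟨t, hts, ht, q'', hq'', hsum'⟩ := ih _ (erase_ssubset hj) q' hq'
    exact ⟨t, hts.trans (erase_subset j s), ht, q'', hq'', hsum'.trans hsum⟩

end Caratheodory

theorem LinearIndepOn.comp_of_ker_le_span_singleton {K M N ι : Type*} [Field K]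
    [AddCommGroup M] [Module K M] [AddCommGroup N] [Module K N] {f : ι → M} {s : Set ι} {a : ι}
    (h : LinearIndepOn K f (insert a s)) (has : a ∉ s) (g : M →ₗ[K] N)
    (hg : LinearMap.ker g ≤ K ∙ f a) : LinearIndepOn K (g ∘ f) s := by
  obtain ⟨hs, hfa⟩ := (linearIndepOn_insert has).1 h
  refine hs.map_injOn g (LinearMap.injOn_of_disjoint_ker le_rfl ?_)
  have hdisj := (Submodule.disjoint_span_singleton' (h.ne_zero (Set.mem_insert a s))).2 hfa
  exact hdisj.mono_right hg

section AdjointWeight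

variable {K V : Type*} [Field K] [DecidableEq V]

def IsAdjointWeight (v : V → K) : Prop :=
  ∃ a b : V, v = Pi.single a 1 - Pi.single b 1

theorem IsAdjointWeight.apply_mem {v : V → K} (hv : IsAdjointWeight v) (R : Subring K) (x : V) :
    v x ∈ R := by
  obtain ⟨a, b, rfl⟩ := hv
  simp only [Pi.sub_apply, Pi.single_apply]
  split_ifs <;> simp [R.one_mem, R.zero_mem]

theorem IsAdjointWeight.mem_of_smul_apply_mem {v : V → K} (hv : IsAdjointWeight v)
    (hv0 : v ≠ 0) {R : Subring K} {c : K} (hc : ∀ x, (c • v) x ∈ R) : c ∈ R := by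
  obtain ⟨a, b, rfl⟩ := hv
  have hab : a ≠ b := by rintro rfl; exact hv0 (sub_self _)
  simpa [Pi.single_apply, hab] using hc a

/-- Merging vertex `b` into `a`: it maps `e_c - e_d` to `e_{σ c} - e_{σ d}`, where `σ b = a`. -/
def contractEdge (a b : V) : (V → K) →ₗ[K] (V → K) :=
  LinearMap.id + (LinearMap.proj b).smulRight (Pi.single a 1 - Pi.single b 1)

theorem contractEdge_apply (a b : V) (y : V → K) :
    contractEdge a b y = y + y b • (Pi.single a 1 - Pi.single b 1) := rfl

theorem contractEdge_apply_self (a b : V) :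
    contractEdge a b (Pi.single a 1 - Pi.single b 1 : V → K) = 0 := by
  by_cases hab : a = b
  · simp [hab, contractEdge_apply]
  · simp [contractEdge_apply, Ne.symm hab]

theorem ker_contractEdge_le (a b : V) :
    LinearMap.ker (contractEdge a b) ≤ K ∙ (Pi.single a 1 - Pi.single b 1 : V → K) := by
  intro y hy
  rw [LinearMap.mem_ker, contractEdge_apply, add_eq_zero_iff_eq_neg, ← neg_smul] at hy
  exact Submodule.mem_span_singleton.2 ⟨_, hy.symm⟩

theorem IsAdjointWeight.contractEdge {v : V → K} (hv : IsAdjointWeight v) (a b : V) :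
    IsAdjointWeight (contractEdge a b v) := by
  obtain ⟨c, d, rfl⟩ := hv
  refine ⟨if c = b then a else c, if d = b then a else d, ?_⟩
  ext x
  simp only [contractEdge_apply, Pi.add_apply, Pi.sub_apply, Pi.smul_apply, Pi.single_apply,
    smul_eq_mul]
  split_ifs <;> subst_vars <;> simp_all

theorem contractEdge_apply_mem {R : Subring K} (a b : V) {y : V → K} (hy : ∀ x, y x ∈ R)
    (x : V) : contractEdge a b y x ∈ R :=
  R.add_mem (hy x) (R.mul_mem (hy b) (IsAdjointWeight.apply_mem ⟨a, b, rfl⟩ R x))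

theorem coeff_mem_of_linearIndepOn_isAdjointWeight {R : Subring K} {ι : Type*}
    (s : Finset ι) {f : ι → V → K} (hf : ∀ i ∈ s, IsAdjointWeight (f i))
    (hs : LinearIndepOn K f (s : Set ι)) {q : ι → K}
    (hq : ∀ x, (∑ i ∈ s, q i • f i) x ∈ R) : ∀ i ∈ s, q i ∈ R := by
  classical
  induction s using Finset.induction_on generalizing f with
  | empty => simp
  | insert a s has ih =>
    obtain ⟨c, d, hfa⟩ := hf a (mem_insert_self a s)
    rw [coe_insert] at hs
    have hcontract : LinearIndepOn K (contractEdge c d ∘ f) (s : Set ι) :=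
      hs.comp_of_ker_le_span_singleton (mod_cast has) _ (hfa ▸ ker_contractEdge_le c d)
    have hsum : ∑ i ∈ s, q i • (contractEdge c d ∘ f) i =
        contractEdge c d (∑ i ∈ insert a s, q i • f i) := by
      simp [map_sum, sum_insert has, hfa, contractEdge_apply_self]
    have hqs : ∀ i ∈ s, q i ∈ R :=
      ih (fun i hi => (hf i (mem_insert_of_mem hi)).contractEdge c d) hcontract
        fun x => hsum ▸ contractEdge_apply_mem c d hq x
    have hqa : q a ∈ R := by
      refine (hf a (mem_insert_self a s)).mem_of_smul_apply_mem
        (hs.ne_zero (Set.mem_insert a _)) fun x => ?_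
      have hfa_eq : q a • f a = ∑ i ∈ insert a s, q i • f i - ∑ i ∈ s, q i • f i := by
        rw [sum_insert has, add_sub_cancel_right]
      rw [hfa_eq, Pi.sub_apply, Finset.sum_apply x s]
      exact R.sub_mem (hq x) <| R.sum_mem fun i hi =>
        R.mul_mem (hqs i hi) ((hf i (mem_insert_of_mem hi)).apply_mem R x)
    simpa [forall_mem_insert] using ⟨hqa, hqs⟩

end AdjointWeight

/-- Every subset of `{eᵢ − eⱼ : 1 ≤ i, j ≤ n} ∪ {0}` is saturated, where `e₁, ..., eₙ` is
the standard basis of `ℤⁿ` (the weight system of the adjoint representation of `SL(n)`). -/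
theorem adjoint_weights_all_subsets_saturated (n : ℕ) (S : Finset (Fin n → ℚ)) 
    (hS : ∀ v ∈ S, v = 0 ∨ ∃ i j : Fin n,
      v = (Pi.single i 1 : Fin n → ℚ) - (Pi.single j 1 : Fin n → ℚ)) :
    IsSaturatedSet S := by
  rintro x ⟨c, hc⟩ ⟨q, hq, hx⟩
  have hS_int : ∀ v ∈ S, ∀ i, v i ∈ (⊥ : Subring ℚ) := fun v hv i => by
    rcases hS v hv with rfl | hw
    · exact zero_mem _
    · exact IsAdjointWeight.apply_mem hw ⊥ i
  obtain ⟨t, hts, ht, q', hq', htx⟩ := exists_linearIndepOn_nonneg_sum_eq S id q hq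
  simp only [id] at htx
  have hint : ∀ v ∈ t, q' v ∈ (⊥ : Subring ℚ) := by
    refine coeff_mem_of_linearIndepOn_isAdjointWeight t
      (fun v hv => (hS v (hts hv)).resolve_left (ht.ne_zero hv)) ht fun i => ?_
    rw [htx, ← hx, hc, Finset.sum_apply i S]
    exact sum_mem fun v hv => mul_mem (intCast_mem _ _) (hS_int v hv i)
  refine ⟨fun v => if v ∈ t then ⌊q' v⌋₊ else 0, ?_⟩
  rw [hx, ← htx, ← sum_subset hts fun v _ hvt => by simp [hvt]]
  refine sum_congr rfl fun v hv => ?_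
  obtain ⟨z, hz⟩ := Subring.mem_bot.1 (hint v hv)
  dsimp only
  rw [if_pos hv, natCast_floor_eq_intCast_floor (hq' v hv), ← hz, Int.floor_intCast]
end

section
/- Every subset of the set {εᵢ + εⱼ : 1 ≤ i < j ≤ 4} ⊂ ℚ⁴/ℚ(1,1,1,1) (equivalently, of {eᵢ + eⱼ : 1 ≤ i < j ≤ 4} where eᵢ = εᵢ − (1/4)(1,1,1,1)) is saturated. -/
/-- The quasi-basis vectors `eᵢ = εᵢ − (1/n)∑ⱼ εⱼ` in `ℚⁿ`; they satisfy `∑ᵢ eᵢ = 0`. -/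
def e (n : ℕ) (i : Fin n) : Fin n → ℚ :=
  fun j => (if j = i then 1 else 0) - 1 / n

/-!
Because `e₁ + e₂ + e₃ + e₄ = 0`, the six weights `eᵢ + eⱼ` are `±(e₁ + eₖ)` for `k = 2, 3, 4`,
and these three vectors `u₁, u₂, u₃` are linearly independent. If `S ⊆ {±uₖ}` and `x` lies in
both `ℤ(S)` and `ℚ₊(S)`, its coordinate `zₖ` along `uₖ` is an integer; nonnegativity of the
rational coefficients forces `uₖ ∈ S` when `zₖ > 0` and `-uₖ ∈ S` when `zₖ < 0`, so
`x = ∑ |zₖ| • (±uₖ)` is a nonnegative integer combination of `S`.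
-/

open Finset

theorem zsmul_mem_closure_of_sign {V : Type*} [AddCommGroup V] {S : Set V} {v : V} {z : ℤ}
    (hpos : 0 < z → v ∈ S) (hneg : z < 0 → -v ∈ S) : z • v ∈ AddSubmonoid.closure S := by
  rcases lt_trichotomy z 0 with hz | rfl | hz
  · have : z • v = (-z).toNat • -v := by
      rw [smul_neg, ← natCast_zsmul, Int.toNat_of_nonneg (by omega), neg_smul, neg_neg]
    exact this ▸ AddSubmonoid.nsmul_mem _ (AddSubmonoid.subset_closure (hneg hz)) _
  · simp
  · have : z • v = z.toNat • v := by rw [← natCast_zsmul, Int.toNat_of_nonneg hz.le]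
    exact this ▸ AddSubmonoid.nsmul_mem _ (AddSubmonoid.subset_closure (hpos hz)) _

theorem exists_natCast_smul_sum_of_mem_closure {R V : Type*} [Semiring R] [AddCommMonoid V]
    [Module R V] {M : Finset V} {x : V} (hx : x ∈ AddSubmonoid.closure (M : Set V)) :
    ∃ m : V → ℕ, x = ∑ v ∈ M, (m v : R) • v := by
  obtain ⟨m, -, rfl⟩ := AddSubmonoid.mem_closure_finset.1 hx
  exact ⟨m, by simp only [Nat.cast_smul_eq_nsmul]⟩

theorem LinearIndependent.injective_sumElim_neg {V ι : Type*} [AddCommGroup V] [Module ℚ V]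
    [Fintype ι] {u : ι → V} (hu : LinearIndependent ℚ u) :
    Function.Injective (Sum.elim u (-u)) := by
  classical
  have ne_neg : ∀ i j, u i ≠ -u j := by
    intro i j h
    have := Fintype.linearIndependent_iffₛ.1 hu (Pi.single i 1) (-Pi.single j 1)
      (by simp [Finset.sum_neg_distrib, h]) i
    by_cases hij : i = j <;> norm_num [hij] at this
  rintro (i | i) (j | j) h <;> simp only [Sum.elim_inl, Sum.elim_inr, Pi.neg_apply] at h
  · rw [hu.injective h]
  · exact absurd h (ne_neg i j)
  · exact absurd h.symm (ne_neg j i)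
  · rw [hu.injective (neg_injective h)]

theorem sum_smul_eq_sum_indicator_sub_indicator {R V ι : Type*} [Ring R] [AddCommGroup V]
    [Module R V] [Fintype ι] {u : ι → V} (hinj : Function.Injective (Sum.elim u (-u)))
    {S : Finset V} (hS : ∀ v ∈ S, ∃ i, v = u i ∨ v = -u i) (f : V → R) :
    ∑ v ∈ S, f v • v =
      ∑ i, ((S : Set V).indicator f (u i) - (S : Set V).indicator f (-u i)) • u i := by
  classical
  have hsub : S ⊆ univ.image (Sum.elim u (-u)) := by
    intro v hv
    obtain ⟨i, rfl | rfl⟩ := hS v hv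
    exacts [mem_image_of_mem _ (mem_univ (Sum.inl i)), mem_image_of_mem _ (mem_univ (Sum.inr i))]
  calc ∑ v ∈ S, f v • v
      = ∑ v ∈ univ.image (Sum.elim u (-u)), (S : Set V).indicator f v • v :=
        (sum_indicator_subset_of_eq_zero f (fun v r => r • v) hsub fun _ => zero_smul R _).symm
    _ = ∑ s, (S : Set V).indicator f (Sum.elim u (-u) s) • Sum.elim u (-u) s :=
        sum_image fun a _ b _ h => hinj h
    _ = _ := by
        simp only [Fintype.sum_sum_type, Sum.elim_inl, Sum.elim_inr, Pi.neg_apply, smul_neg,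
          sum_neg_distrib, sub_smul, sum_sub_distrib, ← sub_eq_add_neg]

theorem isSaturatedSet_of_forall_mem_eq_or_eq_neg {n : ℕ} {ι : Type*} [Fintype ι]
    {u : ι → Fin n → ℚ} (hu : LinearIndependent ℚ u) {S : Finset (Fin n → ℚ)}
    (hS : ∀ v ∈ S, ∃ i, v = u i ∨ v = -u i) : IsSaturatedSet S := by
  rintro x ⟨c, hc⟩ ⟨q, hq, hx⟩
  have regroup := sum_smul_eq_sum_indicator_sub_indicator (R := ℚ) hu.injective_sumElim_neg hS
  set z : ι → ℤ := fun i => (S : Set _).indicator c (u i) - (S : Set _).indicator c (-u i)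
  have hxz : x = ∑ i, (z i : ℚ) • u i := by
    rw [hc, regroup, ← Function.comp_def Int.cast c, Set.indicator_comp_of_zero Int.cast_zero]
    simp [z]
  have hqz : ∀ i, (S : Set _).indicator q (u i) - (S : Set _).indicator q (-u i) = z i :=
    Fintype.linearIndependent_iffₛ.1 hu _ _ (by rw [← regroup, ← hx, hxz])
  have hq_nonneg := Set.indicator_nonneg hq
  refine exists_natCast_smul_sum_of_mem_closure ?_
  rw [hxz]
  refine sum_mem fun i _ => ?_
  rw [Int.cast_smul_eq_zsmul]
  refine zsmul_mem_closure_of_sign (fun hpos => ?_) (fun hneg => ?_)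
  · refine Set.mem_of_indicator_ne_zero (f := q) (ne_of_gt ?_)
    have : (0 : ℚ) < z i := mod_cast hpos
    linarith [hqz i, hq_nonneg (-u i)]
  · refine Set.mem_of_indicator_ne_zero (f := q) (ne_of_gt ?_)
    have : (z i : ℚ) < 0 := mod_cast hneg
    linarith [hqz i, hq_nonneg (u i)]

theorem sum_e_eq_zero (n : ℕ) [NeZero n] : ∑ i, e n i = 0 := by
  funext j
  simp [e, Finset.sum_sub_distrib]

def lambda2Basis (k : Fin 3) : Fin 4 → ℚ := e 4 0 + e 4 k.succ

theorem linearIndependent_lambda2Basis : LinearIndependent ℚ lambda2Basis := by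
  rw [Fintype.linearIndependent_iff]
  intro g hg
  have h0 := congrFun hg 0
  have h1 := congrFun hg 1
  have h2 := congrFun hg 2
  simp [Fin.sum_univ_three, lambda2Basis, e] at h0 h1 h2
  norm_num at h0 h1 h2
  intro k
  fin_cases k <;> simp <;> linarith

theorem exists_e_add_e_eq_lambda2Basis_or_neg {i j : Fin 4} (hij : i < j) :
    ∃ k, e 4 i + e 4 j = lambda2Basis k ∨ e 4 i + e 4 j = -lambda2Basis k := by
  have hsum := sum_e_eq_zero 4
  rw [Fin.sum_univ_four] at hsum
  fin_cases i <;> fin_cases j <;> simp at hij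
  · exact ⟨0, Or.inl rfl⟩
  · exact ⟨1, Or.inl rfl⟩
  · exact ⟨2, Or.inl rfl⟩
  · exact ⟨2, Or.inr <| show e 4 1 + e 4 2 = -(e 4 0 + e 4 3) by linear_combination hsum⟩
  · exact ⟨1, Or.inr <| show e 4 1 + e 4 3 = -(e 4 0 + e 4 2) by linear_combination hsum⟩
  · exact ⟨0, Or.inr <| show e 4 2 + e 4 3 = -(e 4 0 + e 4 1) by linear_combination hsum⟩

/-- Every subset of `{eᵢ + eⱼ : 1 ≤ i < j ≤ 4}` is saturated
(the weight system of `Λ²k^4` for `SL(4)`). -/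
theorem lambda2_sl4_all_subsets_saturated (S : Finset (Fin 4 → ℚ))
    (hS : ∀ v ∈ S, ∃ i j : Fin 4, i < j ∧ v = e 4 i + e 4 j) :
    IsSaturatedSet S :=
  isSaturatedSet_of_forall_mem_eq_or_eq_neg linearIndependent_lambda2Basis fun v hv => by
    obtain ⟨i, j, hij, rfl⟩ := hS v hv
    exact exists_e_add_e_eq_lambda2Basis_or_neg hij
end

section
/- In ℤ⁸, consider the set S of all vectors εᵢ + εⱼ where {i,j} ranges over the edges {1,2},{2,3},{1,3},{3,4},{4,5},{5,6},{6,7},{5,7} (two triangles {1,2,3} and {5,6,7} joined by the path 3–4–5). Then S is not saturated: v = ε₁+ε₂+ε₃+ε₅+ε₆+ε₇ lies in ℤ(S) ∩ ℚ₊(S) but not in ℤ₊(S). -/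
/-- The eight vectors `εᵢ + εⱼ` of `ℤ⁸` corresponding to the edges
`{1,2},{2,3},{1,3},{3,4},{4,5},{5,6},{6,7},{5,7}` (0-indexed below): two triangles
`{1,2,3}` and `{5,6,7}` joined by the path `3–4–5`. -/
def w : Fin 8 → (Fin 8 → ℚ) :=
  ![Pi.single 0 1 + Pi.single 1 1, Pi.single 1 1 + Pi.single 2 1,
    Pi.single 0 1 + Pi.single 2 1, Pi.single 2 1 + Pi.single 3 1,
    Pi.single 3 1 + Pi.single 4 1, Pi.single 4 1 + Pi.single 5 1,
    Pi.single 5 1 + Pi.single 6 1, Pi.single 4 1 + Pi.single 6 1]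

lemma w0 : w 0 = Pi.single 0 1 + Pi.single 1 1 := rfl
lemma w1 : w 1 = Pi.single 1 1 + Pi.single 2 1 := rfl
lemma w2 : w 2 = Pi.single 0 1 + Pi.single 2 1 := rfl
lemma w3 : w 3 = Pi.single 2 1 + Pi.single 3 1 := rfl
lemma w4 : w 4 = Pi.single 3 1 + Pi.single 4 1 := rfl
lemma w5 : w 5 = Pi.single 4 1 + Pi.single 5 1 := rfl
lemma w6 : w 6 = Pi.single 5 1 + Pi.single 6 1 := rfl
lemma w7 : w 7 = Pi.single 4 1 + Pi.single 6 1 := rfl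

/-- Integer coefficients witnessing `v ∈ ℤ(S)`. -/
def cc : Fin 8 → ℤ := ![1,0,0,1,-1,1,0,1]
/-- Nonnegative rational coefficients witnessing `v ∈ ℚ₊(S)`. -/
def qq : Fin 8 → ℚ := ![1/2,1/2,1/2,0,0,1/2,1/2,1/2]

lemma c0 : cc 0 = 1 := rfl
lemma c1 : cc 1 = 0 := rfl
lemma c2 : cc 2 = 0 := rfl
lemma c3 : cc 3 = 1 := rfl
lemma c4 : cc 4 = -1 := rfl
lemma c5 : cc 5 = 1 := rfl
lemma c6 : cc 6 = 0 := rfl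
lemma c7 : cc 7 = 1 := rfl
lemma q0 : qq 0 = 1/2 := rfl
lemma q1 : qq 1 = 1/2 := rfl
lemma q2 : qq 2 = 1/2 := rfl
lemma q3 : qq 3 = 0 := rfl
lemma q4 : qq 4 = 0 := rfl
lemma q5 : qq 5 = 1/2 := rfl
lemma q6 : qq 6 = 1/2 := rfl
lemma q7 : qq 7 = 1/2 := rfl

/-- This set is not saturated: `v = ε₁+ε₂+ε₃+ε₅+ε₆+ε₇` lies in `ℤ(S) ∩ ℚ₊(S)` but not
in `ℤ₊(S)`. -/
theorem two_triangles_NSS :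
    (∃ c : Fin 8 → ℤ,
      (Pi.single 0 1 + Pi.single 1 1 + Pi.single 2 1 + Pi.single 4 1
        + Pi.single 5 1 + Pi.single 6 1 : Fin 8 → ℚ) = ∑ i, (c i : ℚ) • w i) ∧
    (∃ q : Fin 8 → ℚ, (∀ i, 0 ≤ q i) ∧
      (Pi.single 0 1 + Pi.single 1 1 + Pi.single 2 1 + Pi.single 4 1
        + Pi.single 5 1 + Pi.single 6 1 : Fin 8 → ℚ) = ∑ i, q i • w i) ∧
    ¬ ∃ m : Fin 8 → ℕ,
      (Pi.single 0 1 + Pi.single 1 1 + Pi.single 2 1 + Pi.single 4 1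
        + Pi.single 5 1 + Pi.single 6 1 : Fin 8 → ℚ) = ∑ i, (m i : ℚ) • w i := by
  refine ⟨⟨cc, ?_⟩, ⟨qq, ?_, ?_⟩, ?_⟩
  · funext x
    fin_cases x <;>
      simp [Fin.sum_univ_eight, w0, w1, w2, w3, w4, w5, w6, w7,
        c0, c1, c2, c3, c4, c5, c6, c7, Pi.single_apply]
  · intro i
    fin_cases i <;> simp [q0, q1, q2, q3, q4, q5, q6, q7]
  · funext x
    fin_cases x <;>
      simp [Fin.sum_univ_eight, w0, w1, w2, w3, w4, w5, w6, w7,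
        q0, q1, q2, q3, q4, q5, q6, q7, Pi.single_apply] <;> norm_num
  · rintro ⟨m, hm⟩
    have h0 := congrFun hm 0
    have h1 := congrFun hm 1
    have h2 := congrFun hm 2
    have h3 := congrFun hm 3
    simp [Fin.sum_univ_eight, w0, w1, w2, w3, w4, w5, w6, w7, Pi.single_apply] at h0 h1 h2 h3
    have h0' : 1 = m 0 + m 2 := by exact_mod_cast h0
    have h1' : 1 = m 0 + m 1 := by exact_mod_cast h1
    have h2' : 1 = m 1 + m 2 + m 3 := by exact_mod_cast h2
    have h3' : 0 = m 3 + m 4 := by exact_mod_cast h3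
    omega
end
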